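/- For any marked graph G and any vertex v, the marked-graph bracket satisfies [G] = [G_cru^v]. More precisely, for every subset T ⊆ V(G), ν(𝒜(G)_T) = ν(𝒜(G_cru^v)_T). -/

import Mathlib

/-- The six vertex marks of a multiply marked graph. -/
inductive Mark : Type
  | un | r | c | cr | u | ur
deriving DecidableEq

/-- A (multiply marked) graph: symmetric irreflexive adjacency, loops,
marks, and a number of free loops. -/
structure MGraph (V : Type) [DecidableEq V] : Type where
  adj : V → V → Bool
  adj_symm : ∀ x y, adj x y = adj y x
  adj_irrefl : ∀ x, adj x x = false
  loop : V → Bool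
  mark : V → Mark
  freeLoops : ℕ

namespace MGraph

variable {V : Type} [DecidableEq V]

/-- The mark change at `v` itself: unmarked↔u, r↔ur, c↔cr. -/
def flipV : Mark → Mark
  | .un => .u | .u => .un | .r => .ur | .ur => .r | .c => .cr | .cr => .c

/-- The mark change at neighbors of `v`: unmarked↔r, c↔ur, u↔cr. -/
def flipN : Mark → Mark
  | .un => .r | .r => .un | .c => .ur | .ur => .c | .u => .cr | .cr => .u

/-- The marked local complement `G_cru^v`. -/
def mlc (G : MGraph V) (v : V) : MGraph V where
  adj x y := if x ≠ y ∧ G.adj v x = true ∧ G.adj v y = true then !(G.adj x y) else G.adj x y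
  adj_symm := by
    intro x y
    by_cases h : x ≠ y ∧ G.adj v x = true ∧ G.adj v y = true
    · rw [if_pos h, if_pos ⟨h.1.symm, h.2.2, h.2.1⟩, G.adj_symm]
    · rw [if_neg h, if_neg (fun h' => h ⟨h'.1.symm, h'.2.2, h'.2.1⟩), G.adj_symm]
  adj_irrefl := by
    intro x
    rw [if_neg (fun h => h.1 rfl), G.adj_irrefl]
  loop := G.loop
  mark x := if x = v then flipV (G.mark x)
            else if G.adj v x = true then flipN (G.mark x) else G.mark x
  freeLoops := G.freeLoops

end MGraph

/-- Whether a mark contains the letter `r`. -/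
def Mark.hasR : Mark → Bool
  | .r => true | .cr => true | .ur => true | _ => false

/-- Whether a mark is `c` or `cr`. -/
def Mark.isC : Mark → Bool
  | .c => true | .cr => true | _ => false

/-- Whether a mark is `u` or `ur`. -/
def Mark.isU : Mark → Bool
  | .u => true | .ur => true | _ => false

/-- GF(2)-nullity of a square matrix. -/
noncomputable def nullity {n : Type} [Fintype n] (M : Matrix n n (ZMod 2)) : ℕ :=
  Fintype.card n - M.rank

namespace MGraph

variable {V : Type} [DecidableEq V]

/-- The matrix `𝒜(G) + Δ_T` over GF(2): off-diagonal entries record adjacency,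
and the diagonal entry at `x` is the loop contribution plus the `Δ_T` entry,
which is `1` iff (`x ∈ T` and the mark of `x` has no `r`) or (`x ∉ T` and it has an `r`). -/
def matT (G : MGraph V) (T : Finset V) : Matrix V V (ZMod 2) :=
  Matrix.of fun x y =>
    if x = y then
      (if G.loop x = true then 1 else 0) +
        (if ((x ∈ T) ↔ (G.mark x).hasR = false) then 1 else 0)
    else if G.adj x y = true then 1 else 0

/-- The vertices whose rows and columns are kept in `𝒜(G)_T`: delete `x` iff
`x` is marked `c`/`cr` with diagonal entry `0`, or marked `u`/`ur` with diagonal entry `1`. -/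
def keep (G : MGraph V) (T : Finset V) (x : V) : Bool :=
  !(((G.mark x).isC && decide (G.matT T x x = 0)) ||
    ((G.mark x).isU && decide (G.matT T x x = 1)))

/-- The matrix `𝒜(G)_T`, the submatrix of `𝒜(G) + Δ_T` on the kept vertices. -/
def subMat (G : MGraph V) (T : Finset V) :
    Matrix {x : V // G.keep T x = true} {x : V // G.keep T x = true} (ZMod 2) :=
  (G.matT T).submatrix Subtype.val Subtype.val

/-- The marked-graph bracket polynomial, evaluated at elements `A`, `B`, `d`
of a commutative ring. -/
noncomputable def bracket (G : MGraph V) [Fintype V] {R : Type*} [CommRing R]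
    (A B d : R) : R :=
  d ^ G.freeLoops *
    ∑ T : Finset V, A ^ (Fintype.card V - T.card) * B ^ T.card * d ^ nullity (G.subMat T)

/-- The weighted marked-graph bracket polynomial with vertex weights `α`, `β`. -/
noncomputable def wbracket (G : MGraph V) [Fintype V] {R : Type*} [CommRing R]
    (d : R) (α β : V → R) : R :=
  d ^ G.freeLoops *
    ∑ T : Finset V, (∏ x ∈ Tᶜ, α x) * (∏ x ∈ T, β x) * d ^ nullity (G.subMat T)

/-- Deletion of the vertex `v`. -/
def delete (G : MGraph V) (v : V) : MGraph {x : V // x ≠ v} where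
  adj x y := G.adj x.val y.val
  adj_symm := fun x y => G.adj_symm x.val y.val
  adj_irrefl := fun x => G.adj_irrefl x.val
  loop x := G.loop x.val
  mark x := G.mark x.val
  freeLoops := G.freeLoops

/-- Change the mark of the vertex `v` to `m`. -/
def setMark (G : MGraph V) (v : V) (m : Mark) : MGraph V :=
  { G with mark := fun x => if x = v then m else G.mark x }

/-- The one-vertex graph with given loop status and mark (and no free loops). -/
def single (l : Bool) (m : Mark) : MGraph Unit where
  adj _ _ := false
  adj_symm := fun _ _ => rfl
  adj_irrefl := fun _ => rfl
  loop _ := l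
  mark _ := m
  freeLoops := 0

end MGraph

/-!
Over GF(2), write `M = 𝒜(G) + Δ_T` and `N` for the same matrix of `G_cru^v`. Off `v`, `N` is the
rank-one update `M + M_{·v} M_{v·}`: the adjacency toggle gives the off-diagonal entries, and the
`r`-flip at the neighbours of `v` gives the diagonal ones. The marks at `v` are arranged so that
either `v` is kept on both sides with diagonal entry `0`, and then `N = M (1 + e_v M_{v·})` is an
invertible column operation on `M`; or `v` is kept on exactly one side, as a pivot with diagonal
entry `1`, and the matrix on the other side is the Schur complement of that pivot. Both operations
preserve the nullity, and the bracket is then equal term by term.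
-/

namespace Matrix

variable {n K : Type*} [Fintype n] [DecidableEq n]

theorem rank_add_vecMulVec_col_row {R : Type*} [CommRing R] (M : Matrix n n R) (v : n)
    (hv : IsUnit (1 + M v v)) :
    (M + vecMulVec (fun x => M x v) (M v)).rank = M.rank := by
  have hfactor :
      M + vecMulVec (fun x => M x v) (M v) = M * (1 + vecMulVec (Pi.single v 1) (M v)) := by
    rw [Matrix.mul_add, Matrix.mul_one, mul_vecMulVec]
    congr
    funext x
    simp [mulVec, dotProduct, Pi.single_apply]
  have hdet : (1 + vecMulVec (Pi.single v 1) (M v)).det = 1 + M v v := by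
    rw [vecMulVec_eq Unit, det_one_add_replicateCol_mul_replicateRow]
    simp
  rw [hfactor, rank_mul_eq_left_of_isUnit_det _ _ (hdet ▸ hv)]

def schurComplementAt [Field K] (M : Matrix n n K) (v : n) :
    Matrix {x // x ≠ v} {x // x ≠ v} K :=
  of fun x y => M x y - M x v * (M v v)⁻¹ * M v y

variable [Field K]

theorem schurComplementAt_mulVec (M : Matrix n n K) (v : n) (hv : M v v ≠ 0) (x : n → K)
    (r : {x // x ≠ v}) :
    (M.schurComplementAt v *ᵥ (x ∘ Subtype.val)) r =
      (M *ᵥ x) r - M r v * (M v v)⁻¹ * (M *ᵥ x) v := by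
  simp only [mulVec, dotProduct, schurComplementAt, of_apply, Function.comp_apply, sub_mul,
    Finset.sum_sub_distrib, Fintype.sum_eq_add_sum_subtype_ne _ v, mul_add, Finset.mul_sum]
  have hpivot : M r v * (M v v)⁻¹ * (M v v * x v) = M r v * x v := by field_simp
  simp only [hpivot, mul_assoc]
  ring

theorem finrank_ker_schurComplementAt (M : Matrix n n K) (v : n) (hv : M v v ≠ 0) :
    Module.finrank K (LinearMap.ker (M.schurComplementAt v).mulVecLin) =
      Module.finrank K (LinearMap.ker M.mulVecLin) := by
  set f := (LinearMap.funLeft K K (Subtype.val : {x // x ≠ v} → n)).domRestrict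
    (LinearMap.ker M.mulVecLin)
  have hinj : Function.Injective f := by
    rw [← LinearMap.ker_eq_bot, LinearMap.ker_eq_bot']
    rintro ⟨x, hx⟩ hfx
    have hxv (z : {x // x ≠ v}) : x z = 0 := congrFun hfx z
    have hrow := congrFun (LinearMap.mem_ker.mp hx) v
    simp only [mulVecLin_apply, mulVec, dotProduct, Fintype.sum_eq_add_sum_subtype_ne _ v, hxv,
      mul_zero, Finset.sum_const_zero, add_zero, Pi.zero_apply, mul_eq_zero, hv, false_or] at hrow
    ext z
    by_cases hz : z = v
    · subst hz; exact hrow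
    · exact hxv ⟨z, hz⟩
  have hrange : LinearMap.range f = LinearMap.ker (M.schurComplementAt v).mulVecLin := by
    apply le_antisymm
    · rintro _ ⟨⟨x, hx⟩, rfl⟩
      have hx : M *ᵥ x = 0 := hx
      ext r
      change (M.schurComplementAt v *ᵥ (x ∘ Subtype.val)) r = 0
      simp [M.schurComplementAt_mulVec v hv, hx]
    · intro y hy
      have hy : M.schurComplementAt v *ᵥ y = 0 := hy
      set x : n → K := fun z =>
        if h : z = v then -(M v v)⁻¹ * ∑ t : {x // x ≠ v}, M v t * y t else y ⟨z, h⟩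
      have hxy' (z : {x // x ≠ v}) : x z = y z := dif_neg z.2
      have hxy : x ∘ Subtype.val = y := funext hxy'
      have hxv : (M *ᵥ x) v = 0 := by
        simp only [mulVec, dotProduct, Fintype.sum_eq_add_sum_subtype_ne _ v, hxy']
        simp only [x, dif_pos]
        field_simp
        ring
      have hx : M *ᵥ x = 0 := by
        ext r
        by_cases hr : r = v
        · subst hr; exact hxv
        · have := M.schurComplementAt_mulVec v hv x ⟨r, hr⟩
          rw [hxy, hy, hxv] at this
          simpa using this.symm
      exact ⟨⟨x, hx⟩, hxy⟩
  rw [← hrange, LinearMap.finrank_range_of_inj hinj]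

end Matrix

namespace MGraph

variable {V : Type} [DecidableEq V] (G : MGraph V) (v : V) (T : Finset V)

theorem flipV_flipV (m : Mark) : flipV (flipV m) = m := by cases m <;> rfl

theorem flipN_flipN (m : Mark) : flipN (flipN m) = m := by cases m <;> rfl

theorem hasR_flipN (m : Mark) : (flipN m).hasR = !m.hasR := by cases m <;> rfl

theorem isC_flipN (m : Mark) : (flipN m).isC = m.isU := by cases m <;> rfl

theorem isU_flipN (m : Mark) : (flipN m).isU = m.isC := by cases m <;> rfl

@[ext]
theorem ext {G H : MGraph V} (hadj : G.adj = H.adj) (hloop : G.loop = H.loop)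
    (hmark : G.mark = H.mark) (hfreeLoops : G.freeLoops = H.freeLoops) : G = H := by
  cases G; cases H; subst_vars; rfl

theorem matT_isSymm : (G.matT T).IsSymm := by
  ext x y
  by_cases h : x = y
  · subst h; rfl
  · simp [matT, h, Ne.symm h, G.adj_symm x y]

theorem matT_apply_of_ne {x y : V} (h : x ≠ y) :
    G.matT T x y = if G.adj x y then 1 else 0 := by
  simp [matT, h]

theorem adj_mlc (x y : V) :
    (G.mlc v).adj x y = if x ≠ y ∧ G.adj v x ∧ G.adj v y then !G.adj x y else G.adj x y := rfl

theorem adj_mlc_self (x : V) : (G.mlc v).adj v x = G.adj v x := by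
  simp [mlc, G.adj_irrefl]

theorem mark_mlc_self : (G.mlc v).mark v = flipV (G.mark v) := by
  simp [mlc]

theorem mark_mlc_of_ne {x : V} (hx : x ≠ v) :
    (G.mlc v).mark x = if G.adj v x then flipN (G.mark x) else G.mark x := by
  simp [mlc, hx]

theorem loop_mlc : (G.mlc v).loop = G.loop := rfl

theorem mlc_mlc : (G.mlc v).mlc v = G := by
  ext x y
  · rw [adj_mlc, adj_mlc_self, adj_mlc_self, adj_mlc]
    split_ifs <;> simp
  · rfl
  · by_cases hx : x = v
    · subst hx
      rw [mark_mlc_self, mark_mlc_self, flipV_flipV]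
    · rw [mark_mlc_of_ne _ _ hx, mark_mlc_of_ne _ _ hx, adj_mlc_self]
      split_ifs <;> simp [flipN_flipN]
  · rfl

theorem matT_mlc_self :
    (G.mlc v).matT T v v = G.matT T v v + if (G.mark v).isC then 1 else 0 := by
  simp only [matT, Matrix.of_apply, if_true, mark_mlc_self, loop_mlc, add_assoc]
  congr 1
  rcases G.mark v <;> by_cases hT : v ∈ T <;> simp [hT, flipV, Mark.hasR, Mark.isC] <;> decide

theorem matT_mlc_self_of_ne {x : V} (hx : x ≠ v) : (G.mlc v).matT T v x = G.matT T v x := by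
  simp [matT, Ne.symm hx, adj_mlc_self]

theorem matT_mlc_of_ne {x y : V} (hx : x ≠ v) (hy : y ≠ v) :
    (G.mlc v).matT T x y = G.matT T x y + G.matT T v x * G.matT T v y := by
  simp only [matT, Matrix.of_apply, if_neg (Ne.symm hx), if_neg (Ne.symm hy)]
  by_cases hxy : x = y
  · -- at a neighbour `flipN` toggles the `r`, so `Δ_T` changes by `1 = (M v x)²`
    subst hxy
    simp only [if_true, loop_mlc, mark_mlc_of_ne G v hx, add_assoc]
    congr 1
    cases G.adj v x <;> cases hR : (G.mark x).hasR <;> by_cases hT : x ∈ T <;>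
      simp [hT, hR, hasR_flipN] <;> decide
  · simp only [adj_mlc, ne_eq, hxy, not_false_eq_true, true_and]
    cases G.adj v x <;> cases G.adj v y <;> cases G.adj x y <;> simp; decide

theorem keep_mlc_of_ne {x : V} (hx : x ≠ v) : (G.mlc v).keep T x = G.keep T x := by
  simp only [keep, G.matT_mlc_of_ne v T hx hx, G.matT_apply_of_ne T (Ne.symm hx),
    mark_mlc_of_ne G v hx]
  generalize G.matT T x x = a
  cases G.adj v x <;>
    simp only [Bool.false_eq_true, if_false, if_true, mul_zero, add_zero, mul_one, isC_flipN,
      isU_flipN]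
  cases G.mark x <;> revert a <;> decide

theorem keep_mlc_self_cases :
    (G.keep T v ∧ (G.mlc v).keep T v ∧ G.matT T v v = 0 ∧ (G.mlc v).matT T v v = 0) ∨
    (G.keep T v ∧ (G.mlc v).keep T v = false ∧ G.matT T v v = 1) ∨
    (G.keep T v = false ∧ (G.mlc v).keep T v ∧ (G.mlc v).matT T v v = 1) := by
  simp only [keep, matT_mlc_self, mark_mlc_self]
  generalize G.matT T v v = a
  rcases G.mark v <;> revert a <;> decide

end MGraph

section Nullity

variable {m n : Type} [Fintype m] [Fintype n]

theorem nullity_submatrix_equiv (M : Matrix n n (ZMod 2)) (e : m ≃ n) :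
    nullity (M.submatrix e e) = nullity M := by
  rw [nullity, nullity, Matrix.rank_submatrix, Fintype.card_congr e]

theorem nullity_eq_finrank_ker (M : Matrix n n (ZMod 2)) :
    nullity M = Module.finrank (ZMod 2) (LinearMap.ker M.mulVecLin) := by
  have := LinearMap.finrank_range_add_finrank_ker M.mulVecLin
  rw [Module.finrank_pi] at this
  rw [nullity, Matrix.rank]
  omega

variable [DecidableEq n]

theorem nullity_add_vecMulVec_col_row (M : Matrix n n (ZMod 2)) (v : n) (hv : M v v = 0) :
    nullity (M + Matrix.vecMulVec (fun x => M x v) (M v)) = nullity M := by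
  rw [nullity, nullity, M.rank_add_vecMulVec_col_row v (by simp [hv])]

theorem nullity_schurComplementAt (M : Matrix n n (ZMod 2)) (v : n) (hv : M v v ≠ 0) :
    nullity (M.schurComplementAt v) = nullity M := by
  rw [nullity_eq_finrank_ker, nullity_eq_finrank_ker, M.finrank_ker_schurComplementAt v hv]

end Nullity

namespace MGraph

variable {V : Type} [DecidableEq V] [Fintype V] (G : MGraph V) (v : V) (T : Finset V)

theorem nullity_subMat_mlc_of_keep_self (hG : G.keep T v) (hmlc : (G.mlc v).keep T v)
    (hM : G.matT T v v = 0) (hN : (G.mlc v).matT T v v = 0) :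
    nullity ((G.mlc v).subMat T) = nullity (G.subMat T) := by
  have hkeep (x : V) : (G.mlc v).keep T x = true ↔ G.keep T x = true := by
    by_cases hx : x = v
    · subst hx; simp [hG, hmlc]
    · rw [G.keep_mlc_of_ne v T hx]
  have hmat : (G.mlc v).matT T =
      G.matT T + Matrix.vecMulVec (fun x => G.matT T x v) (G.matT T v) := by
    ext x y
    simp only [Matrix.add_apply, Matrix.vecMulVec_apply]
    by_cases hx : x = v <;> by_cases hy : y = v
    · subst hx hy; simp [hM, hN]
    · subst hx; simp [G.matT_mlc_self_of_ne x T hy, hM]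
    · subst hy
      rw [← (G.mlc y).matT_isSymm T |>.apply, G.matT_mlc_self_of_ne y T hx,
        (G.matT_isSymm T).apply, hM, mul_zero, add_zero]
    · rw [G.matT_mlc_of_ne v T hx hy, (G.matT_isSymm T).apply v x]
  let w : {x // G.keep T x} := ⟨v, hG⟩
  let e := Equiv.subtypeEquivRight hkeep
  calc nullity ((G.mlc v).subMat T)
      = nullity ((G.subMat T + Matrix.vecMulVec (fun x => G.subMat T x w) (G.subMat T w)).submatrix
          e e) := by
        congr 1
        ext x y
        simp [subMat, hmat, e, w, Matrix.vecMulVec_apply]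
    _ = nullity (G.subMat T) := by
        rw [nullity_submatrix_equiv, nullity_add_vecMulVec_col_row (G.subMat T) w hM]

theorem nullity_subMat_mlc_of_pivot (hG : G.keep T v) (hmlc : (G.mlc v).keep T v = false)
    (hM : G.matT T v v = 1) :
    nullity ((G.mlc v).subMat T) = nullity (G.subMat T) := by
  have hkeep (x : V) : (G.mlc v).keep T x = true ↔ G.keep T x = true ∧ x ≠ v := by
    by_cases hx : x = v
    · subst hx; simp [hmlc]
    · rw [G.keep_mlc_of_ne v T hx]; simp [hx]
  let w : {x // G.keep T x} := ⟨v, hG⟩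
  let e : {x // (G.mlc v).keep T x} ≃ {z : {x // G.keep T x} // z ≠ w} :=
    ((Equiv.subtypeEquivRight hkeep).trans
      (Equiv.subtypeSubtypeEquivSubtypeInter _ (· ≠ v)).symm).trans
      (Equiv.subtypeEquivRight fun _ => by simp [w, Subtype.ext_iff])
  calc nullity ((G.mlc v).subMat T)
      = nullity (((G.subMat T).schurComplementAt w).submatrix e e) := by
        congr 1
        ext x y
        have hx : x.1 ≠ v := ((hkeep x).mp x.2).2
        have hy : y.1 ≠ v := ((hkeep y).mp y.2).2
        simp [subMat, Matrix.schurComplementAt, e, w, hM, G.matT_mlc_of_ne v T hx hy,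
          (G.matT_isSymm T).apply v x.1, CharTwo.sub_eq_add]
    _ = nullity (G.subMat T) := by
        rw [nullity_submatrix_equiv, nullity_schurComplementAt _ _ (by simp [subMat, w, hM])]

theorem nullity_subMat_mlc : nullity ((G.mlc v).subMat T) = nullity (G.subMat T) := by
  rcases G.keep_mlc_self_cases v T with
    ⟨hG, hmlc, hM, hN⟩ | ⟨hG, hmlc, hM⟩ | ⟨hG, hmlc, hN⟩
  · exact G.nullity_subMat_mlc_of_keep_self v T hG hmlc hM hN
  · exact G.nullity_subMat_mlc_of_pivot v T hG hmlc hM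
  · have := (G.mlc v).nullity_subMat_mlc_of_pivot v T hmlc (by rwa [mlc_mlc]) hN
    rw [mlc_mlc] at this
    exact this.symm

end MGraph

/-- the marked-graph bracket is invariant under marked local
complementation, and indeed term by term: for every `T ⊆ V(G)`,
`ν(𝒜(G)_T) = ν(𝒜(G_cru^v)_T)`. -/
theorem bracket_mlc_invariant {V : Type} [DecidableEq V] [Fintype V]
    (G : MGraph V) (v : V) {R : Type*} [CommRing R] (A B d : R) :
    (∀ T : Finset V, nullity (G.subMat T) = nullity ((G.mlc v).subMat T)) ∧
    G.bracket A B d = (G.mlc v).bracket A B d := by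
  have hnullity (T : Finset V) := (G.nullity_subMat_mlc v T).symm
  refine ⟨hnullity, ?_⟩
  simp only [MGraph.bracket, hnullity]
  rfl
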